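/- arXiv:2012.13571 — 3 statements merged into one kernel-verified Lean document; each statement's English description precedes it below -/
import Mathlib

section
/- Let μ, ν be finite measures on a measurable space (X, 𝒯) with μ absolutely continuous with respect to ν, and let f = dμ/dν be the Radon–Nikodym derivative. If there exist 0 < α < 1 and C > 0 such that μ(A) ≤ C ν(A)^α for all measurable A, then f belongs to weak L^p(ν) with p = 1/(1-α); that is, there exists C' > 0 such that ν({x : f(x) ≥ λ}) ≤ C' λ^{-p} for all λ > 0. -/
/-! Since `∫_A dμ/dν dν ≤ μ A`, on `A = {dμ/dν ≥ λ}` one gets `λ ν(A) ≤ μ(A) ≤ C ν(A)^α`,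
which solves to `ν(A)^(1-α) ≤ C/λ`. -/

open MeasureTheory

lemma MeasureTheory.Measure.mul_measure_le_of_le_rnDeriv {X : Type*} [MeasurableSpace X]
    {μ ν : Measure X} {s : Set X} {c : ENNReal}
    (hc : ∀ x ∈ s, c ≤ μ.rnDeriv ν x) : c * ν s ≤ μ s :=
  calc c * ν s = ∫⁻ _ in s, c ∂ν := by rw [setLIntegral_const, mul_comm]
    _ ≤ ∫⁻ x in s, μ.rnDeriv ν x ∂ν := setLIntegral_mono (μ.measurable_rnDeriv ν) hc
    _ ≤ μ s := Measure.setLIntegral_rnDeriv_le s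

lemma Real.le_div_rpow_of_mul_le_mul_rpow {l t C α : ℝ} (hl : 0 < l) (ht : 0 ≤ t) (hC : 0 ≤ C)
    (hα : α < 1) (h : l * t ≤ C * t ^ α) : t ≤ (C / l) ^ (1 / (1 - α)) := by
  rcases ht.eq_or_lt with rfl | ht
  · exact Real.rpow_nonneg (div_nonneg hC hl.le) _
  have hαt : 0 < t ^ α := Real.rpow_pos_of_pos ht α
  have hroot : t ^ (1 - α) ≤ C / l := by
    rw [Real.rpow_sub ht, Real.rpow_one, div_le_div_iff₀ hαt hl]
    linarith
  calc t = (t ^ (1 - α)) ^ (1 / (1 - α)) := by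
        rw [one_div, Real.rpow_rpow_inv ht.le (by linarith)]
    _ ≤ (C / l) ^ (1 / (1 - α)) :=
        Real.rpow_le_rpow (Real.rpow_nonneg ht.le _) hroot (one_div_nonneg.2 (by linarith))

theorem stmt1_general {X : Type*} [MeasurableSpace X] (μ ν : Measure X)
    [IsFiniteMeasure μ]
    (α C : ℝ) (hα1 : α < 1) (hC : 0 < C)
    (hbound : ∀ A : Set X, MeasurableSet A → (μ A).toReal ≤ C * (ν A).toReal ^ α) :
    ∃ C' > 0, ∀ l : ℝ, 0 < l →
      (ν {x | l ≤ (μ.rnDeriv ν x).toReal}).toReal ≤ C' * l ^ (-(1/(1-α))) := by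
  refine ⟨C ^ (1 / (1 - α)), Real.rpow_pos_of_pos hC _, fun l hl => ?_⟩
  set A := {x | l ≤ (μ.rnDeriv ν x).toReal}
  have hA : MeasurableSet A :=
    measurableSet_le measurable_const (μ.measurable_rnDeriv ν).ennreal_toReal
  have hmarkov : l * (ν A).toReal ≤ (μ A).toReal := by
    have := ENNReal.toReal_mono (measure_ne_top μ A) <|
      Measure.mul_measure_le_of_le_rnDeriv fun x hx => ENNReal.ofReal_le_of_le_toReal hx
    rwa [ENNReal.toReal_mul, ENNReal.toReal_ofReal hl.le] at this
  calc (ν A).toReal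
      ≤ (C / l) ^ (1 / (1 - α)) := Real.le_div_rpow_of_mul_le_mul_rpow hl ENNReal.toReal_nonneg
        hC.le hα1 (hmarkov.trans (hbound A hA))
    _ = C ^ (1 / (1 - α)) * l ^ (-(1 / (1 - α))) := by
        rw [Real.div_rpow hC.le hl.le, Real.rpow_neg hl.le, div_eq_mul_inv]

theorem stmt1 {X : Type*} [MeasurableSpace X] (μ ν : Measure X)
    [IsFiniteMeasure μ] [IsFiniteMeasure ν] (hac : μ ≪ ν)
    (α C : ℝ) (hα0 : 0 < α) (hα1 : α < 1) (hC : 0 < C)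
    (hbound : ∀ A : Set X, MeasurableSet A → (μ A).toReal ≤ C * (ν A).toReal ^ α) :
    ∃ C' > 0, ∀ l : ℝ, 0 < l →
      (ν {x | l ≤ (μ.rnDeriv ν x).toReal}).toReal ≤ C' * l ^ (-(1/(1-α))) :=
  stmt1_general μ ν α C hα1 hC hbound
end

section
/- Let p > 1 and let μ be a probability measure on H¹(ℝ) that is invariant under the flow Σ of the defocusing NLS i∂_s U + ∂_y² U = |U|^{p−1} U. Then μ = δ_0. One may assume as input: (a) the equation is globally well-posed in H¹(ℝ) with conservation of the L² norm, and (b) for every u ∈ H¹(ℝ) and every r ∈ (2, ∞], ‖Σ(s) u‖_{L^r(ℝ)} → 0 as s → +∞. -/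
open MeasureTheory ENNReal

/-- Membership in `H¹(ℝ)`: the function and its derivative are in `L²(ℝ)`. -/
def memH1 (u : ℝ → ℂ) : Prop :=
  MemLp u 2 (volume : Measure ℝ) ∧ MemLp (deriv u) 2 (volume : Measure ℝ)

/-!
Fix a ball `B`. For `u ∈ H¹`, Hölder on `B` and the decay of `‖S s u‖_{L⁴}` give
`‖S s u‖_{L²(B)} → 0`. Since `μ` is invariant, `∫ min(‖u‖_{L²(B)}, 1) dμ` equals its value along
the flow, which tends to `0` by dominated convergence. Hence `u = 0` on every ball `μ`-a.e., so
`μ` is concentrated at `0`.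
-/

open Filter Topology

namespace MeasureTheory

section Lp

variable {α E : Type*} [MeasurableSpace α] {μ : Measure α} [NormedAddCommGroup E]

theorem continuous_eLpNorm_restrict [NormedSpace ℝ E] {p : ℝ≥0∞} [Fact (1 ≤ p)] (s : Set α) :
    Continuous fun u : Lp E p μ => eLpNorm u p (μ.restrict s) := by
  have h : (fun u : Lp E p μ => eLpNorm u p (μ.restrict s)) =
      fun u => ‖LpToLpRestrictCLM α E ℝ μ p s u‖ₑ := by
    ext u
    rw [Lp.enorm_def, eLpNorm_congr_ae (LpToLpRestrictCLM_coeFn ℝ s u)]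
  rw [h]
  exact continuous_enorm.comp (LpToLpRestrictCLM α E ℝ μ p s).continuous

theorem Lp.eq_zero_of_forall_eLpNorm_restrict_eq_zero {p : ℝ≥0∞} (hp : p ≠ 0) (u : Lp E p μ)
    {s : ℕ → Set α} (hs : ⋃ n, s n = Set.univ) (h : ∀ n, eLpNorm u p (μ.restrict (s n)) = 0) :
    u = 0 := by
  have hu := (ae_restrict_iUnion_iff s _).2 fun n =>
    (eLpNorm_eq_zero_iff (Lp.aestronglyMeasurable u).restrict hp).1 (h n)
  rw [hs, Measure.restrict_univ] at hu
  exact Lp.eq_zero_iff_ae_eq_zero.2 hu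

theorem tendsto_eLpNorm_restrict_of_tendsto_eLpNorm {ι : Type*} {l : Filter ι} {F : ι → α → E}
    (hF : ∀ i, AEStronglyMeasurable (F i) μ) {p q : ℝ≥0∞} (hpq : p ≤ q) {s : Set α}
    (hs : μ s ≠ ∞) (h : Tendsto (fun i => eLpNorm (F i) q μ) l (𝓝 0)) :
    Tendsto (fun i => eLpNorm (F i) p (μ.restrict s)) l (𝓝 0) := by
  rcases eq_or_ne p 0 with rfl | hp
  · simpa using tendsto_const_nhds
  set c := μ s ^ (1 / p.toReal - 1 / q.toReal)
  have hc : c ≠ ∞ := by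
    refine rpow_ne_top_of_nonneg (sub_nonneg.2 ?_) hs
    rcases eq_or_ne q ∞ with rfl | hq
    · simp only [toReal_top, _root_.div_zero]
      positivity
    exact one_div_le_one_div_of_le (toReal_pos hp (ne_top_of_le_ne_top hq hpq)) (toReal_mono hq hpq)
  have hbound : ∀ i, eLpNorm (F i) p (μ.restrict s) ≤ eLpNorm (F i) q μ * c := fun i =>
    calc eLpNorm (F i) p (μ.restrict s)
        ≤ eLpNorm (F i) q (μ.restrict s) * μ.restrict s Set.univ ^ (1 / p.toReal - 1 / q.toReal) :=
          eLpNorm_le_eLpNorm_mul_rpow_measure_univ hpq (hF i).restrict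
      _ ≤ eLpNorm (F i) q μ * c := by
          rw [Measure.restrict_apply_univ]
          exact mul_le_mul_left (eLpNorm_restrict_le _ _ _ _) _
  have hlim : Tendsto (fun i => eLpNorm (F i) q μ * c) l (𝓝 0) := by
    simpa using ENNReal.Tendsto.mul_const h (Or.inr hc)
  exact tendsto_of_tendsto_of_tendsto_of_le_of_le tendsto_const_nhds hlim (fun _ => bot_le)
    hbound

end Lp

section Invariant

variable {X ι : Type*} [MeasurableSpace X] {μ : Measure X}

theorem ae_eq_zero_of_map_eq_of_tendsto_comp [IsFiniteMeasure μ] {l : Filter ι} [l.NeBot]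
    [l.IsCountablyGenerated] {T : ι → X → X} (hT : ∀ i, Measurable (T i))
    (hinv : ∀ i, μ.map (T i) = μ) {f : X → ℝ≥0∞} (hf : Measurable f)
    (hdecay : ∀ᵐ x ∂μ, Tendsto (fun i => f (T i x)) l (𝓝 0)) :
    f =ᵐ[μ] 0 := by
  -- truncation supplies the integrable bound needed for dominated convergence
  set g := fun x => min (f x) 1
  have hg : Measurable g := hf.min measurable_const
  have hconst : ∀ i, ∫⁻ x, g (T i x) ∂μ = ∫⁻ x, g x ∂μ := fun i => by
    rw [← lintegral_map hg (hT i), hinv]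
  have hlim : Tendsto (fun i => ∫⁻ x, g (T i x) ∂μ) l (𝓝 0) := by
    rw [← lintegral_zero]
    exact tendsto_lintegral_filter_of_dominated_convergence (μ := μ) (f := 0) (fun _ => 1)
      (.of_forall fun i => hg.comp (hT i))
      (.of_forall fun i => .of_forall fun x => min_le_right _ _)
      (by simp) (hdecay.mono fun x hx => by simpa using hx.min tendsto_const_nhds)
  have hg0 : ∫⁻ x, g x ∂μ = 0 :=
    tendsto_nhds_unique (by simp only [hconst]; exact tendsto_const_nhds) hlim
  filter_upwards [(lintegral_eq_zero_iff hg).1 hg0] with x hx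
  simpa [g] using hx

theorem Measure.eq_dirac_of_ae_eq [IsProbabilityMeasure μ] {a : X} (h : ∀ᵐ x ∂μ, x = a) :
    μ = Measure.dirac a := by
  calc μ = μ.map id := Measure.map_id.symm
    _ = μ.map fun _ => a := Measure.map_congr h
    _ = Measure.dirac a := by simp [Measure.map_const]

end Invariant

end MeasureTheory

theorem stmt13_general
    [MeasurableSpace (Lp ℂ 2 (volume : Measure ℝ))]
    [BorelSpace (Lp ℂ 2 (volume : Measure ℝ))]
    (S : ℝ → Lp ℂ 2 (volume : Measure ℝ) → Lp ℂ 2 (volume : Measure ℝ))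
    (hmeas : ∀ s, Measurable (S s))
    (hdecay : ∀ u : Lp ℂ 2 (volume : Measure ℝ), memH1 (u : ℝ → ℂ) →
      ∀ r : ℝ≥0∞, 2 < r →
        Filter.Tendsto (fun s => eLpNorm ((S s u : Lp ℂ 2 (volume : Measure ℝ)) : ℝ → ℂ) r volume)
          Filter.atTop (nhds 0))
    (μ : Measure (Lp ℂ 2 (volume : Measure ℝ))) [IsProbabilityMeasure μ]
    (hsupp : μ {u : Lp ℂ 2 (volume : Measure ℝ) | memH1 (u : ℝ → ℂ)} = 1)
    (hinv : ∀ s, Measure.map (S s) μ = μ) :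
    μ = Measure.dirac 0 := by
  set f : ℕ → Lp ℂ 2 (volume : Measure ℝ) → ℝ≥0∞ :=
    fun n u => eLpNorm u 2 (volume.restrict (Metric.closedBall 0 n))
  have hf : ∀ n, Measurable (f n) := fun n => (continuous_eLpNorm_restrict _).measurable
  have hf_decay : ∀ n (u : Lp ℂ 2 (volume : Measure ℝ)), memH1 (u : ℝ → ℂ) →
      Tendsto (fun k : ℕ => f n (S k u)) atTop (𝓝 0) := fun n u hu =>
    (tendsto_eLpNorm_restrict_of_tendsto_eLpNorm (fun _ => Lp.aestronglyMeasurable _)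
      (by norm_num) measure_closedBall_lt_top.ne (hdecay u hu 4 (by norm_num))).comp
      tendsto_natCast_atTop_atTop
  -- integer times make the convergence set measurable, which `hsupp` alone does not provide
  have hf_decay_ae : ∀ n, ∀ᵐ u ∂μ, Tendsto (fun k : ℕ => f n (S k u)) atTop (𝓝 0) := by
    intro n
    have hset : MeasurableSet {u | Tendsto (fun k : ℕ => f n (S k u)) atTop (𝓝 0)} :=
      measurableSet_tendsto _ fun k => (hf n).comp (hmeas k)
    rw [ae_iff_measure_eq hset.nullMeasurableSet, measure_univ]
    exact le_antisymm prob_le_one (hsupp ▸ measure_mono (hf_decay n))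
  have hf_zero : ∀ n, f n =ᵐ[μ] 0 := fun n =>
    ae_eq_zero_of_map_eq_of_tendsto_comp (fun k : ℕ => hmeas k) (fun k => hinv k) (hf n)
      (hf_decay_ae n)
  refine Measure.eq_dirac_of_ae_eq ?_
  filter_upwards [ae_all_iff.2 hf_zero] with u hu
  exact Lp.eq_zero_of_forall_eLpNorm_restrict_eq_zero two_ne_zero u
    (Metric.iUnion_closedBall_nat 0) hu

/-- A probability measure on `H¹(ℝ)` invariant under the (defocusing NLS) flow `S`, where one
assumes as input: (a) the flow is globally defined on `H¹`, conserves the `L²` norm, and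
(b) for every `u ∈ H¹` and every `r ∈ (2,∞]`, `‖S(s)u‖_{L^r} → 0` as `s → +∞`, must be the
Dirac mass at `0`. -/
theorem stmt13 (p : ℝ) (hp : 1 < p)
    [MeasurableSpace (Lp ℂ 2 (volume : Measure ℝ))]
    [BorelSpace (Lp ℂ 2 (volume : Measure ℝ))]
    (S : ℝ → Lp ℂ 2 (volume : Measure ℝ) → Lp ℂ 2 (volume : Measure ℝ))
    (hmeas : ∀ s, Measurable (S s))
    (hcons : ∀ (s : ℝ) (u : Lp ℂ 2 (volume : Measure ℝ)), ‖S s u‖ = ‖u‖)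
    (hH1 : ∀ (s : ℝ) (u : Lp ℂ 2 (volume : Measure ℝ)),
      memH1 (u : ℝ → ℂ) → memH1 ((S s u : Lp ℂ 2 (volume : Measure ℝ)) : ℝ → ℂ))
    (hdecay : ∀ u : Lp ℂ 2 (volume : Measure ℝ), memH1 (u : ℝ → ℂ) →
      ∀ r : ℝ≥0∞, 2 < r →
        Filter.Tendsto (fun s => eLpNorm ((S s u : Lp ℂ 2 (volume : Measure ℝ)) : ℝ → ℂ) r volume)
          Filter.atTop (nhds 0))
    (μ : Measure (Lp ℂ 2 (volume : Measure ℝ))) [IsProbabilityMeasure μ]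
    (hsupp : μ {u : Lp ℂ 2 (volume : Measure ℝ) | memH1 (u : ℝ → ℂ)} = 1)
    (hinv : ∀ s, Measure.map (S s) μ = μ) :
    μ = Measure.dirac 0 :=
  stmt13_general S hmeas hdecay μ hsupp hinv
end

section
/- Differential inequality argument: let f : [0, T) → (0, 1) be C¹, satisfying f'(t) ≤ −β tan(2t) log(f(t)) f(t) for all t ∈ [0, T) with T ≤ π/4 and β > 0. Then for all 0 ≤ s ≤ t < T, f(t) ≤ f(s)^{(cos(2t)/cos(2s))^{β/2}}. -/
/-!
Put `u = -log f > 0`. Dividing the differential inequality by `f` gives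
`u' / u ≥ -β tan (2t) = (β/2) (log cos (2t))'`, so `log u - (β/2) log cos (2t)` is nondecreasing
on `[0, T)`. Exponentiating between `s` and `t` gives
`-log f(t) ≥ -log f(s) · (cos (2t) / cos (2s))^{β/2}`, which is the claim.
-/

open Real Set

theorem monotoneOn_log_sub_of_le_logDeriv {I : Set ℝ} (hI : Convex ℝ I) {u u' g g' : ℝ → ℝ}
    (hu : ∀ x ∈ I, HasDerivAt u (u' x) x) (hg : ∀ x ∈ I, HasDerivAt g (g' x) x)
    (hpos : ∀ x ∈ I, 0 < u x) (hle : ∀ x ∈ I, g' x ≤ u' x / u x) :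
    MonotoneOn (fun x => log (u x) - g x) I := by
  have hderiv : ∀ x ∈ I, HasDerivAt (fun x => log (u x) - g x) (u' x / u x - g' x) x :=
    fun x hx => ((hu x hx).log (hpos x hx).ne').sub (hg x hx)
  refine monotoneOn_of_deriv_nonneg hI
    (fun x hx => (hderiv x hx).continuousAt.continuousWithinAt)
    (fun x hx => (hderiv x (interior_subset hx)).differentiableAt.differentiableWithinAt)
    (fun x hx => ?_)
  rw [(hderiv x (interior_subset hx)).deriv]
  exact sub_nonneg.2 (hle x (interior_subset hx))

theorem cos_two_mul_pos {x : ℝ} (hx₀ : 0 ≤ x) (hx : x < π / 4) : 0 < cos (2 * x) :=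
  cos_pos_of_mem_Ioo ⟨by linarith [pi_pos], by linarith⟩

theorem hasDerivAt_log_cos_two_mul {x : ℝ} (hx : cos (2 * x) ≠ 0) :
    HasDerivAt (fun y => log (cos (2 * y))) (-2 * tan (2 * x)) x := by
  have h := (((hasDerivAt_id x).const_mul 2).cos).log hx
  simp only [id, mul_one] at h
  convert h using 1
  rw [tan_eq_sin_div_cos]
  ring

theorem mul_div_rpow_le_of_log_sub_le {a b p q c : ℝ} (ha : 0 < a) (hb : 0 < b)
    (hp : 0 < p) (hq : 0 < q) (h : log a - c * log p ≤ log b - c * log q) :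
    a * (q / p) ^ c ≤ b := by
  have hr : 0 < (q / p) ^ c := rpow_pos_of_pos (div_pos hq hp) c
  rw [← log_le_log_iff (mul_pos ha hr) hb, log_mul ha.ne' hr.ne', log_rpow (div_pos hq hp),
    log_div hq.ne' hp.ne']
  linarith

theorem le_rpow_of_neg_log_mul_le {a b r : ℝ} (ha : 0 < a) (hb : 0 < b)
    (h : -log a * r ≤ -log b) : b ≤ a ^ r := by
  rw [← log_le_log_iff hb (rpow_pos_of_pos ha r), log_rpow ha]
  linarith

theorem stmt17_general (T β : ℝ) (hT : T ≤ Real.pi/4)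
    (f f' : ℝ → ℝ)
    (hrange : ∀ t ∈ Set.Ico (0:ℝ) T, 0 < f t ∧ f t < 1)
    (hderiv : ∀ t ∈ Set.Ico (0:ℝ) T, HasDerivAt f (f' t) t)
    (hineq : ∀ t ∈ Set.Ico (0:ℝ) T, f' t ≤ -β * Real.tan (2*t) * Real.log (f t) * f t) :
    ∀ s t : ℝ, 0 ≤ s → s ≤ t → t < T →
      f t ≤ (f s) ^ ((Real.cos (2*t) / Real.cos (2*s)) ^ (β/2)) := by
  intro s t hs hst htT
  have hcos : ∀ x ∈ Ico (0:ℝ) T, 0 < cos (2 * x) := fun x hx =>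
    cos_two_mul_pos hx.1 (hx.2.trans_le hT)
  have hu : ∀ x ∈ Ico (0:ℝ) T, 0 < -log (f x) := fun x hx =>
    neg_pos.2 (log_neg (hrange x hx).1 (hrange x hx).2)
  have hmono : MonotoneOn (fun x => log (-log (f x)) - β / 2 * log (cos (2 * x))) (Ico 0 T) := by
    refine monotoneOn_log_sub_of_le_logDeriv (convex_Ico 0 T)
      (fun x hx => ((hderiv x hx).log (hrange x hx).1.ne').neg)
      (fun x hx => (hasDerivAt_log_cos_two_mul (hcos x hx).ne').const_mul (β / 2)) hu
      (fun x hx => ?_)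
    have hf := (hrange x hx).1
    rw [le_div_iff₀ (hu x hx), ← neg_div, le_div_iff₀ hf]
    linarith [hineq x hx]
  have hsmem : s ∈ Ico (0:ℝ) T := ⟨hs, hst.trans_lt htT⟩
  have htmem : t ∈ Ico (0:ℝ) T := ⟨hs.trans hst, htT⟩
  exact le_rpow_of_neg_log_mul_le (hrange s hsmem).1 (hrange t htmem).1
    (mul_div_rpow_le_of_log_sub_le (hu s hsmem) (hu t htmem) (hcos s hsmem) (hcos t htmem)
      (hmono hsmem htmem hst))

theorem stmt17 (T β : ℝ) (hT0 : 0 < T) (hT : T ≤ Real.pi/4) (hβ : 0 < β)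
    (f f' : ℝ → ℝ)
    (hrange : ∀ t ∈ Set.Ico (0:ℝ) T, 0 < f t ∧ f t < 1)
    (hderiv : ∀ t ∈ Set.Ico (0:ℝ) T, HasDerivAt f (f' t) t)
    (hcont : ContinuousOn f' (Set.Ico (0:ℝ) T))
    (hineq : ∀ t ∈ Set.Ico (0:ℝ) T, f' t ≤ -β * Real.tan (2*t) * Real.log (f t) * f t) :
    ∀ s t : ℝ, 0 ≤ s → s ≤ t → t < T →
      f t ≤ (f s) ^ ((Real.cos (2*t) / Real.cos (2*s)) ^ (β/2)) :=
  stmt17_general T β hT f f' hrange hderiv hineq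
end
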